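/- The set R⁺∞ := {(a0, a1, a2, φ) ∈ ℝ⁴ : a1 > 0 > a2, φ > 0} is forward-invariant for the type-I monopole ODE system: any C¹ solution (a0, a1, a2, φ) on [t1, t2] ⊂ (0,∞) whose value at t1 lies in R⁺∞ remains in R⁺∞ for all t ∈ [t1, t2]. -/

import Mathlib

open Set

/-- A solution of the type-I monopole ODE system, with `μ = √(u1² − u0²)`:
`a0' = (4λ/μ²)((a1² + a2² − 1)u0 − (a0 − a1² + a2²)u1)`,
`a1' = (3/(2λ))(a0 − 1)a1 − 2((u1 − u0)/μ)·a2·φ`,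
`a2' = −(3/(2λ))(a0 + 1)a2 − 2((u1 + u0)/μ)·a1·φ`,
`φ' = −(6/μ)·a1·a2`. -/
def IsSolTypeIMonopole (u0 : ℝ) (lam u1 a0 a1 a2 phi : ℝ → ℝ) (s : Set ℝ) : Prop :=
  ∀ t ∈ s,
    HasDerivAt a0 ((4 * lam t / (u1 t ^ 2 - u0 ^ 2)) *
      ((a1 t ^ 2 + a2 t ^ 2 - 1) * u0 - (a0 t - a1 t ^ 2 + a2 t ^ 2) * u1 t)) t ∧
    HasDerivAt a1 ((3 / (2 * lam t)) * (a0 t - 1) * a1 t -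
      2 * ((u1 t - u0) / Real.sqrt (u1 t ^ 2 - u0 ^ 2)) * a2 t * phi t) t ∧
    HasDerivAt a2 (-(3 / (2 * lam t)) * (a0 t + 1) * a2 t -
      2 * ((u1 t + u0) / Real.sqrt (u1 t ^ 2 - u0 ^ 2)) * a1 t * phi t) t ∧
    HasDerivAt phi (-(6 / Real.sqrt (u1 t ^ 2 - u0 ^ 2)) * a1 t * a2 t) t

lemma aux_gronwall (f f' : ℝ → ℝ) (a b K : ℝ) (hab : a ≤ b)
    (hd : ∀ x ∈ Icc a b, HasDerivAt f (f' x) x)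
    (hge : ∀ x ∈ Icc a b, -K * f x ≤ f' x)
    (hf0 : ∀ x ∈ Icc a b, 0 ≤ f x)
    (hfa : 0 < f a) : 0 < f b := by
  set g : ℝ → ℝ := fun x => f x * Real.exp (K * x) with hg
  have hgd : ∀ x ∈ Icc a b, HasDerivAt g (f' x * Real.exp (K * x) + f x * (Real.exp (K * x) * K)) x := by
    intro x hx
    have h := (hd x hx).mul (((hasDerivAt_id x).const_mul K).exp)
    simp only [id, mul_one] at h
    exact h
  have hmono : MonotoneOn g (Icc a b) := by
    apply monotoneOn_of_deriv_nonneg (convex_Icc a b)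
    · exact fun x hx => (hgd x hx).continuousAt.continuousWithinAt
    · intro x hx
      rw [interior_Icc] at hx
      exact ((hgd x (Ioo_subset_Icc_self hx)).differentiableAt.differentiableWithinAt)
    · intro x hx
      rw [interior_Icc] at hx
      have hx' := Ioo_subset_Icc_self hx
      rw [(hgd x hx').deriv]
      have h1 := hge x hx'
      have h2 := hf0 x hx'
      have h3 := (Real.exp_pos (K * x)).le
      nlinarith
  have := hmono (left_mem_Icc.mpr hab) (right_mem_Icc.mpr hab) hab
  simp only [hg] at this
  have hea := Real.exp_pos (K * a)
  have heb := Real.exp_pos (K * b)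
  nlinarith [hf0 b (right_mem_Icc.mpr hab)]

/-- The set `R⁺∞ = {(a0, a1, a2, φ) : a1 > 0 > a2, φ > 0}` is forward-invariant for the
type-I monopole ODE system: any solution on `[t1, t2] ⊂ (0,∞)` starting in `R⁺∞` at `t1`
remains there.  Here `u0` is a constant and `λ`, `u1` are continuous on `(0,∞)` with
`λ > 0` and `u1 > |u0|`. -/
theorem forward_invariant_RplusInfty (u0 : ℝ) (lam u1 : ℝ → ℝ)
    (hlamc : ContinuousOn lam (Ioi 0))
    (hu1c : ContinuousOn u1 (Ioi 0))
    (hlam : ∀ t ∈ Ioi (0 : ℝ), 0 < lam t)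
    (hu1 : ∀ t ∈ Ioi (0 : ℝ), |u0| < u1 t)
    (a0 a1 a2 phi : ℝ → ℝ) (t1 t2 : ℝ) (ht1 : 0 < t1) (ht12 : t1 ≤ t2)
    (hsol : IsSolTypeIMonopole u0 lam u1 a0 a1 a2 phi (Icc t1 t2))
    (hinit : 0 < a1 t1 ∧ a2 t1 < 0 ∧ 0 < phi t1) :
    ∀ t ∈ Icc t1 t2, 0 < a1 t ∧ a2 t < 0 ∧ 0 < phi t := by
  obtain ⟨hA1, hA2, hPhi⟩ := hinit
  have hIoi : Icc t1 t2 ⊆ Ioi 0 := fun t ht => lt_of_lt_of_le ht1 ht.1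
  -- continuity at points of the interval
  have hca0 : ∀ t ∈ Icc t1 t2, ContinuousAt a0 t := fun t ht => (hsol t ht).1.continuousAt
  have hca1 : ∀ t ∈ Icc t1 t2, ContinuousAt a1 t := fun t ht => (hsol t ht).2.1.continuousAt
  have hca2 : ∀ t ∈ Icc t1 t2, ContinuousAt a2 t := fun t ht => (hsol t ht).2.2.1.continuousAt
  have hcphi : ∀ t ∈ Icc t1 t2, ContinuousAt phi t := fun t ht => (hsol t ht).2.2.2.continuousAt
  -- positivity facts
  have hmu : ∀ t ∈ Icc t1 t2, 0 < Real.sqrt (u1 t ^ 2 - u0 ^ 2) := by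
    intro t ht
    have h := hu1 t (hIoi ht)
    have h0 : |u0| ≤ |u0| := le_refl _
    have : u0 ^ 2 < u1 t ^ 2 := by
      have := abs_nonneg u0
      nlinarith [sq_abs u0]
    exact Real.sqrt_pos.mpr (by linarith)
  have hu1m : ∀ t ∈ Icc t1 t2, 0 < u1 t - u0 ∧ 0 < u1 t + u0 := by
    intro t ht
    have h := hu1 t (hIoi ht)
    have h1 := le_abs_self u0
    have h2 := neg_abs_le u0
    constructor <;> linarith
  by_contra hcon
  push_neg at hcon
  obtain ⟨t0, ht0, hbad⟩ := hcon
  -- the bad set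
  set S : Set ℝ := {t | t ∈ Icc t1 t2 ∧ ¬(0 < a1 t ∧ a2 t < 0 ∧ 0 < phi t)} with hSdef
  have hSne : S.Nonempty := by
    refine ⟨t0, ht0, ?_⟩
    rintro ⟨p1, p2, p3⟩
    linarith [hbad p1 p2]
  have hSbdd : BddBelow S := ⟨t1, fun x hx => hx.1.1⟩
  have hSclosed : IsClosed S := by
    have hrw : S = (Icc t1 t2 ∩ a1 ⁻¹' Iic 0) ∪ ((Icc t1 t2 ∩ a2 ⁻¹' Ici 0) ∪ (Icc t1 t2 ∩ phi ⁻¹' Iic 0)) := by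
      ext x
      simp only [hSdef, mem_setOf_eq, mem_union, mem_inter_iff, mem_preimage, mem_Iic, mem_Ici]
      constructor
      · rintro ⟨hx, hnx⟩
        by_cases h1 : 0 < a1 x
        · by_cases h2 : a2 x < 0
          · exact Or.inr (Or.inr ⟨hx, by by_contra h3; exact hnx ⟨h1, h2, by linarith⟩⟩)
          · exact Or.inr (Or.inl ⟨hx, by linarith⟩)
        · exact Or.inl ⟨hx, by linarith⟩
      · rintro (⟨hx, h⟩ | ⟨hx, h⟩ | ⟨hx, h⟩) <;> exact ⟨hx, fun ⟨p1, p2, p3⟩ => by linarith⟩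
    rw [hrw]
    have hc1 : ContinuousOn a1 (Icc t1 t2) := fun x hx => (hca1 x hx).continuousWithinAt
    have hc2 : ContinuousOn a2 (Icc t1 t2) := fun x hx => (hca2 x hx).continuousWithinAt
    have hc3 : ContinuousOn phi (Icc t1 t2) := fun x hx => (hcphi x hx).continuousWithinAt
    exact ((hc1.preimage_isClosed_of_isClosed isClosed_Icc isClosed_Iic).union
      ((hc2.preimage_isClosed_of_isClosed isClosed_Icc isClosed_Ici).union
        (hc3.preimage_isClosed_of_isClosed isClosed_Icc isClosed_Iic)))
  set τ := sInf S with hτdef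
  have hτS : τ ∈ S := hSclosed.csInf_mem hSne hSbdd
  have hτmem : τ ∈ Icc t1 t2 := hτS.1
  have hτne : τ ≠ t1 := by
    intro h
    exact hτS.2 (h ▸ ⟨hA1, hA2, hPhi⟩)
  have ht1τ : t1 < τ := lt_of_le_of_ne hτmem.1 (Ne.symm hτne)
  have hIco : ∀ s ∈ Ico t1 τ, 0 < a1 s ∧ a2 s < 0 ∧ 0 < phi s := by
    intro s hs
    have hsIcc : s ∈ Icc t1 t2 := ⟨hs.1, le_trans hs.2.le hτmem.2⟩
    by_contra h
    exact absurd (csInf_le hSbdd ⟨hsIcc, h⟩) (not_le.mpr hs.2)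
  -- boundary limits
  have hlim : ∀ f : ℝ → ℝ, ContinuousAt f τ → (∀ s ∈ Ico t1 τ, 0 ≤ f s) → 0 ≤ f τ := by
    intro f hcf hf
    have tends : Filter.Tendsto f (nhdsWithin τ (Iio τ)) (nhds (f τ)) :=
      hcf.tendsto.mono_left nhdsWithin_le_nhds
    refine ge_of_tendsto tends ?_
    have hmem : Ioo t1 τ ∈ nhdsWithin τ (Iio τ) :=
      mem_nhdsWithin.mpr ⟨Ioi t1, isOpen_Ioi, ht1τ, fun x hx => ⟨hx.1, hx.2⟩⟩
    filter_upwards [hmem] with x hx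
    exact hf x ⟨hx.1.le, hx.2⟩
  have h1τ : 0 ≤ a1 τ := hlim a1 (hca1 τ hτmem) (fun s hs => (hIco s hs).1.le)
  have h2τ : a2 τ ≤ 0 := by
    have h := hlim (fun x => -a2 x) ((hca2 τ hτmem).neg)
      (fun s hs => by simpa using (hIco s hs).2.1.le)
    simpa using h
  have h3τ : 0 ≤ phi τ := hlim phi (hcphi τ hτmem) (fun s hs => (hIco s hs).2.2.le)
  -- nonnegativity on the closed interval [t1, τ]
  have hsubτ : Icc t1 τ ⊆ Icc t1 t2 := Icc_subset_Icc le_rfl hτmem.2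
  have hnn : ∀ x ∈ Icc t1 τ, 0 ≤ a1 x ∧ a2 x ≤ 0 ∧ 0 ≤ phi x := by
    intro x hx
    rcases eq_or_lt_of_le hx.2 with h | h
    · rw [h]; exact ⟨h1τ, h2τ, h3τ⟩
    · obtain ⟨p1, p2, p3⟩ := hIco x ⟨hx.1, h⟩
      exact ⟨p1.le, p2.le, p3.le⟩
  -- a bound K for both coefficient functions
  obtain ⟨K, hK⟩ : ∃ K, ∀ x ∈ Icc t1 τ, |3 / (2 * lam x) * (a0 x - 1)| ≤ K ∧
      |3 / (2 * lam x) * (a0 x + 1)| ≤ K := by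
    have hclam : ContinuousOn lam (Icc t1 τ) :=
      hlamc.mono (fun x hx => hIoi (hsubτ hx))
    have hca0' : ContinuousOn a0 (Icc t1 τ) :=
      fun x hx => (hca0 x (hsubτ hx)).continuousWithinAt
    have hlamne : ∀ x ∈ Icc t1 τ, 2 * lam x ≠ 0 := by
      intro x hx
      have := hlam x (hIoi (hsubτ hx))
      positivity
    have hcf : ContinuousOn (fun x => |3 / (2 * lam x) * (a0 x - 1)| + |3 / (2 * lam x) * (a0 x + 1)|) (Icc t1 τ) := by
      apply ContinuousOn.add
      · exact ((continuousOn_const.div (continuousOn_const.mul hclam) hlamne).mul (hca0'.sub continuousOn_const)).abs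
      · exact ((continuousOn_const.div (continuousOn_const.mul hclam) hlamne).mul (hca0'.add continuousOn_const)).abs
    obtain ⟨C, hC⟩ := isCompact_Icc.exists_bound_of_continuousOn hcf
    refine ⟨C, fun x hx => ?_⟩
    have := hC x hx
    rw [Real.norm_eq_abs, abs_of_nonneg (by positivity)] at this
    constructor <;> [linarith [abs_nonneg (3 / (2 * lam x) * (a0 x + 1))];
      linarith [abs_nonneg (3 / (2 * lam x) * (a0 x - 1))]]
  -- rule out each boundary case
  rcases (not_and_or.mp hτS.2) with h | h
  · -- a1 τ = 0 case (a1 τ ≤ 0)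
    have ha1τ : a1 τ ≤ 0 := not_lt.mp h
    have : 0 < a1 τ := by
      apply aux_gronwall a1
        (fun x => 3 / (2 * lam x) * (a0 x - 1) * a1 x -
          2 * ((u1 x - u0) / Real.sqrt (u1 x ^ 2 - u0 ^ 2)) * a2 x * phi x)
        t1 τ K ht1τ.le
      · exact fun x hx => (hsol x (hsubτ hx)).2.1
      · intro x hx
        obtain ⟨p1, p2, p3⟩ := hnn x hx
        have hk := (hK x hx).1
        have hc : 0 ≤ (u1 x - u0) / Real.sqrt (u1 x ^ 2 - u0 ^ 2) :=
          div_nonneg (hu1m x (hsubτ hx)).1.le (hmu x (hsubτ hx)).le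
        have habs := abs_le.mp hk
        nlinarith [mul_nonneg (mul_nonneg hc (neg_nonneg.mpr p2)) p3]
      · exact fun x hx => (hnn x hx).1
      · exact hA1
    linarith
  rcases (not_and_or.mp h) with h | h
  · -- a2 τ = 0 case (0 ≤ a2 τ)
    have ha2τ : 0 ≤ a2 τ := not_lt.mp h
    have : 0 < -a2 τ := by
      apply aux_gronwall (fun x => -a2 x)
        (fun x => -(-(3 / (2 * lam x)) * (a0 x + 1) * a2 x -
          2 * ((u1 x + u0) / Real.sqrt (u1 x ^ 2 - u0 ^ 2)) * a1 x * phi x))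
        t1 τ K ht1τ.le
      · exact fun x hx => (hsol x (hsubτ hx)).2.2.1.neg
      · intro x hx
        obtain ⟨p1, p2, p3⟩ := hnn x hx
        have hk := (hK x hx).2
        have hc : 0 ≤ (u1 x + u0) / Real.sqrt (u1 x ^ 2 - u0 ^ 2) :=
          div_nonneg (hu1m x (hsubτ hx)).2.le (hmu x (hsubτ hx)).le
        have habs := abs_le.mp hk
        nlinarith [mul_nonneg (mul_nonneg hc p1) p3]
      · intro x hx; linarith [(hnn x hx).2.1]
      · linarith
    linarith
  · -- phi τ = 0 case (phi τ ≤ 0)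
    have hpτ : phi τ ≤ 0 := not_lt.mp h
    have : 0 < phi τ := by
      apply aux_gronwall phi
        (fun x => -(6 / Real.sqrt (u1 x ^ 2 - u0 ^ 2)) * a1 x * a2 x)
        t1 τ 0 ht1τ.le
      · exact fun x hx => (hsol x (hsubτ hx)).2.2.2
      · intro x hx
        obtain ⟨p1, p2, p3⟩ := hnn x hx
        have hm : 0 < 6 / Real.sqrt (u1 x ^ 2 - u0 ^ 2) := by
          have := hmu x (hsubτ hx); positivity
        nlinarith [mul_nonneg (mul_nonneg hm.le p1) (neg_nonneg.mpr p2)]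
      · exact fun x hx => (hnn x hx).2.2
      · exact hPhi
    linarith
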